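/- Let φ: ℝ → ℝ be a Schwartz function whose Fourier transform is smooth, even, nonnegative, equal to 1 on |ξ| ≤ 1/4 and supported in |ξ| ≤ 1/2. For p with 1 ≤ p < ∞, the sequence a_n = ‖φ(x)³ · cos((17/12)·2ⁿ x)‖_{L^p(ℝ)} converges as n → ∞ to ((1/(2π)) ∫₀^{2π} |cos x|^p dx)^{1/p} · ‖φ³‖_{L^p(ℝ)}. -/

import Mathlib

open MeasureTheory Filter FourierTransform Real

theorem averaging_key (g : ℝ → ℝ) (hgi : Integrable g)
    (lam : ℕ → ℝ) (hlam : Tendsto lam atTop atTop)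
    (H : C(AddCircle (2 * π), ℂ)) :
    Tendsto (fun n => ∫ x : ℝ, (g x : ℂ) * H ((lam n * x : ℝ) : AddCircle (2 * π)))
      atTop
      (nhds (((1 / (2 * π : ℂ)) * ∫ x in (0:ℝ)..(2 * π), H ((x : ℝ) : AddCircle (2 * π))) *
        ∫ x : ℝ, (g x : ℂ))) := by
  haveI : Fact (0 < 2 * π) := ⟨Real.two_pi_pos⟩
  set M : C(AddCircle (2 * π), ℂ) → ℂ :=
    fun Q => (1 / (2 * π : ℂ)) * ∫ x in (0:ℝ)..(2 * π), Q ((x : ℝ) : AddCircle (2 * π)) with hM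
  set Bc : ℂ := ∫ x : ℝ, (g x : ℂ) with hBc
  -- integrability of the products
  have hint : ∀ (Q : C(AddCircle (2 * π), ℂ)) (c : ℝ),
      Integrable (fun x : ℝ => (g x : ℂ) * Q ((c * x : ℝ) : AddCircle (2 * π))) := by
    intro Q c
    have hmeas : Continuous (fun x : ℝ => Q ((c * x : ℝ) : AddCircle (2 * π))) := by
      exact Q.continuous.comp ((AddCircle.continuous_mk' (2 * π)).comp
        (continuous_const.mul continuous_id))
    have := (hgi.ofReal (𝕜 := ℂ)).bdd_mul hmeas.aestronglyMeasurable
      (c := ‖Q‖) (ae_of_all _ fun x => Q.norm_coe_le_norm _)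
    exact this.congr (Eventually.of_forall fun x => mul_comm _ _)
  have hpiC : ((π : ℂ)) ≠ 0 := Complex.ofReal_ne_zero.2 Real.pi_ne_zero
  -- value of M on fourier monomials
  have hM0 : M (_root_.fourier 0) = 1 := by
    have h1 : ∀ x : ℝ, (_root_.fourier 0 : C(AddCircle (2 * π), ℂ)) ((x : ℝ) : AddCircle (2 * π)) = 1 :=
      fun x => fourier_zero
    simp only [hM, h1, intervalIntegral.integral_const, sub_zero, smul_eq_mul, mul_one,
      Complex.real_smul, Complex.ofReal_mul, Complex.ofReal_ofNat]
    field_simp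
  have hMk : ∀ k : ℤ, k ≠ 0 → M (_root_.fourier k) = 0 := by
    intro k hk
    have hc : (2 * (π : ℂ) * Complex.I * k / ((2 * π : ℝ) : ℂ)) ≠ 0 :=
      div_ne_zero (mul_ne_zero (mul_ne_zero (mul_ne_zero two_ne_zero hpiC) Complex.I_ne_zero)
        (Int.cast_ne_zero.2 hk)) (Complex.ofReal_ne_zero.2 Real.two_pi_pos.ne')
    have heq : (∫ x in (0:ℝ)..(2 * π),
        (_root_.fourier k : C(AddCircle (2 * π), ℂ)) ((x : ℝ) : AddCircle (2 * π)))
        = ∫ x in (0:ℝ)..(2 * π),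
          Complex.exp ((2 * (π : ℂ) * Complex.I * k / ((2 * π : ℝ) : ℂ)) * x) := by
      refine intervalIntegral.integral_congr fun x _ => ?_
      rw [fourier_coe_apply]
      congr 1
      ring
    have : (∫ x in (0:ℝ)..(2 * π),
        Complex.exp ((2 * (π : ℂ) * Complex.I * k / ((2 * π : ℝ) : ℂ)) * x)) = 0 := by
      rw [integral_exp_mul_complex hc]
      have h2 : (2 * (π : ℂ) * Complex.I * k / ((2 * π : ℝ) : ℂ)) * ((2 * π : ℝ) : ℂ)
          = k * (2 * π * Complex.I) := by
        push_cast
        field_simp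
      rw [h2, Complex.exp_int_mul_two_pi_mul_I]
      simp
    show (1 / (2 * (π : ℂ)) * ∫ x in (0:ℝ)..(2 * π),
        (_root_.fourier k : C(AddCircle (2 * π), ℂ)) ((x : ℝ) : AddCircle (2 * π))) = 0
    rw [heq, this, mul_zero]
  -- the tendsto property for each fourier monomial
  have hfour : ∀ k : ℤ, Tendsto
      (fun n => ∫ x : ℝ, (g x : ℂ) *
        (_root_.fourier k : C(AddCircle (2 * π), ℂ)) ((lam n * x : ℝ) : AddCircle (2 * π)))
      atTop (nhds (M (_root_.fourier k) * Bc)) := by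
    intro k
    rcases eq_or_ne k 0 with rfl | hk
    · rw [hM0, one_mul]
      have : ∀ n : ℕ, (∫ x : ℝ, (g x : ℂ) *
          (_root_.fourier 0 : C(AddCircle (2 * π), ℂ)) ((lam n * x : ℝ) : AddCircle (2 * π))) = Bc := by
        intro n
        rw [hBc]
        congr 1
        funext x
        rw [fourier_zero, mul_one]
      simpa only [this] using tendsto_const_nhds
    · rw [hMk k hk, zero_mul]
      set w : ℕ → ℝ := fun n => -(k * lam n) / (2 * π) with hw
      have hseq : ∀ n : ℕ, (∫ x : ℝ, (g x : ℂ) *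
          (_root_.fourier k : C(AddCircle (2 * π), ℂ)) ((lam n * x : ℝ) : AddCircle (2 * π)))
          = ∫ v : ℝ, 𝐞 (-(v * w n)) • ((g v : ℂ)) := by
        intro n
        congr 1
        funext x
        rw [fourier_coe_apply, Circle.smul_def, Real.fourierChar_apply, mul_comm]
        congr 1
        rw [hw]
        push_cast
        field_simp
      have hwten : Tendsto w atTop (cocompact ℝ) := by
        rw [cocompact_eq_atBot_atTop]
        have : w = fun n => (-(k : ℝ) / (2 * π)) * lam n := by
          funext n; rw [hw]; ring
        rw [this]
        rcases lt_or_gt_of_ne (Int.cast_ne_zero.2 hk : (k:ℝ) ≠ 0) with hkneg | hkpos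
        · have hc : 0 < -(k : ℝ) / (2 * π) := div_pos (by linarith) Real.two_pi_pos
          exact (hlam.const_mul_atTop hc).mono_right le_sup_right
        · have hc : -(k : ℝ) / (2 * π) < 0 :=
            div_neg_of_neg_of_pos (by linarith) Real.two_pi_pos
          exact (hlam.const_mul_atTop_of_neg hc).mono_right le_sup_left
      have := (Real.tendsto_integral_exp_smul_cocompact (fun v : ℝ => (g v : ℂ))).comp hwten
      simpa only [Function.comp_def, hseq] using this
  -- extend to the span of the fourier monomials
  have hspan : ∀ Q ∈ Submodule.span ℂ (Set.range (@_root_.fourier (2 * π))),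
      Tendsto (fun n => ∫ x : ℝ, (g x : ℂ) * Q ((lam n * x : ℝ) : AddCircle (2 * π)))
        atTop (nhds (M Q * Bc)) := by
    intro Q hQ
    induction hQ using Submodule.span_induction with
    | mem Q hQ => obtain ⟨k, rfl⟩ := hQ; exact hfour k
    | zero =>
        have hM0' : M (0 : C(AddCircle (2 * π), ℂ)) = 0 := by
          simp [hM]
        rw [hM0', zero_mul]
        simpa using tendsto_const_nhds (x := (0 : ℂ))
    | add Q1 Q2 hQ1m hQ2m h1 h2 =>
        have hMadd : M (Q1 + Q2) = M Q1 + M Q2 := by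
          rw [hM]
          simp only [ContinuousMap.add_apply]
          have i1 : IntervalIntegrable (fun x : ℝ => Q1 ((x : ℝ) : AddCircle (2 * π)))
              volume 0 (2 * π) :=
            (Q1.continuous.comp (AddCircle.continuous_mk' _)).intervalIntegrable _ _
          have i2 : IntervalIntegrable (fun x : ℝ => Q2 ((x : ℝ) : AddCircle (2 * π)))
              volume 0 (2 * π) :=
            (Q2.continuous.comp (AddCircle.continuous_mk' _)).intervalIntegrable _ _
          rw [intervalIntegral.integral_add i1 i2]
          ring
        have heq : ∀ n : ℕ, (∫ x : ℝ, (g x : ℂ) * (Q1 + Q2) ((lam n * x : ℝ) : AddCircle (2 * π)))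
            = (∫ x : ℝ, (g x : ℂ) * Q1 ((lam n * x : ℝ) : AddCircle (2 * π)))
              + ∫ x : ℝ, (g x : ℂ) * Q2 ((lam n * x : ℝ) : AddCircle (2 * π)) := by
          intro n
          rw [← integral_add (hint Q1 _) (hint Q2 _)]
          congr 1
          funext x
          simp [mul_add]
        rw [hMadd, add_mul]
        simpa only [heq] using h1.add h2
    | smul c Q hQm h =>
        have hMs : M (c • Q) = c * M Q := by
          rw [hM]
          simp only [ContinuousMap.smul_apply, smul_eq_mul]
          rw [intervalIntegral.integral_const_mul]
          ring
        have heq : ∀ n : ℕ, (∫ x : ℝ, (g x : ℂ) * (c • Q) ((lam n * x : ℝ) : AddCircle (2 * π)))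
            = c * ∫ x : ℝ, (g x : ℂ) * Q ((lam n * x : ℝ) : AddCircle (2 * π)) := by
          intro n
          rw [← integral_const_mul]
          congr 1
          funext x
          simp only [ContinuousMap.smul_apply, smul_eq_mul]
          ring
        rw [hMs, mul_assoc]
        simpa only [heq] using h.const_mul c
  -- pass to the closure by an ε/3 argument
  rw [Metric.tendsto_atTop]
  intro ε hε
  set B0 : ℝ := ∫ x : ℝ, |g x| with hB0
  have hB0nonneg : 0 ≤ B0 := integral_nonneg fun x => abs_nonneg _
  have hBcnorm : ‖Bc‖ ≤ B0 := by
    rw [hBc, hB0]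
    refine le_trans (norm_integral_le_integral_norm _) (le_of_eq ?_)
    congr 1
    funext x
    rw [Complex.norm_real, Real.norm_eq_abs]
  set δ : ℝ := ε / (3 * (B0 + 1)) with hδ
  have hδpos : 0 < δ := by positivity
  have hδB0 : δ * B0 < ε / 3 := by
    have h1 : δ * B0 < δ * (B0 + 1) := by nlinarith
    have h2 : δ * (B0 + 1) = ε / 3 := by
      rw [hδ]
      field_simp
    linarith
  have hHcl : H ∈ closure
      ((Submodule.span ℂ (Set.range (@_root_.fourier (2 * π)))) : Set C(AddCircle (2 * π), ℂ)) := by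
    have h1 : H ∈ (Submodule.span ℂ (Set.range (@_root_.fourier (2 * π)))).topologicalClosure := by
      rw [span_fourier_closure_eq_top]
      trivial
    rwa [← Submodule.topologicalClosure_coe]
  obtain ⟨Q, hQmem, hQdist⟩ := Metric.mem_closure_iff.1 hHcl δ hδpos
  obtain ⟨N, hN⟩ := Metric.tendsto_atTop.1 (hspan Q hQmem) (ε / 3) (by positivity)
  refine ⟨N, fun n hn => ?_⟩
  have hptbd : ∀ y : AddCircle (2 * π), ‖H y - Q y‖ ≤ δ := by
    intro y
    rw [← dist_eq_norm]
    exact le_trans (ContinuousMap.dist_apply_le_dist y) hQdist.le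
  have key1 : dist (∫ x : ℝ, (g x : ℂ) * H ((lam n * x : ℝ) : AddCircle (2 * π)))
      (∫ x : ℝ, (g x : ℂ) * Q ((lam n * x : ℝ) : AddCircle (2 * π))) ≤ δ * B0 := by
    rw [dist_eq_norm, ← integral_sub (hint H _) (hint Q _)]
    have hb : ∀ x : ℝ, ‖(g x : ℂ) * H ((lam n * x : ℝ) : AddCircle (2 * π))
        - (g x : ℂ) * Q ((lam n * x : ℝ) : AddCircle (2 * π))‖ ≤ |g x| * δ := by
      intro x
      rw [← mul_sub, norm_mul, Complex.norm_real, Real.norm_eq_abs]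
      exact mul_le_mul_of_nonneg_left (hptbd _) (abs_nonneg _)
    refine le_trans (norm_integral_le_of_norm_le (hgi.abs.mul_const δ) (ae_of_all _ hb))
      (le_of_eq ?_)
    rw [integral_mul_const, hB0, mul_comm]
  have key3 : dist (M Q * Bc) (M H * Bc) ≤ δ * B0 := by
    rw [dist_eq_norm, ← sub_mul, norm_mul]
    have h1 : ‖M Q - M H‖ ≤ δ := by
      rw [hM]
      have iQ : IntervalIntegrable (fun x : ℝ => Q ((x : ℝ) : AddCircle (2 * π)))
          volume 0 (2 * π) :=
        (Q.continuous.comp (AddCircle.continuous_mk' _)).intervalIntegrable _ _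
      have iH : IntervalIntegrable (fun x : ℝ => H ((x : ℝ) : AddCircle (2 * π)))
          volume 0 (2 * π) :=
        (H.continuous.comp (AddCircle.continuous_mk' _)).intervalIntegrable _ _
      rw [← mul_sub, ← intervalIntegral.integral_sub iQ iH]
      rw [norm_mul]
      have h2 : ‖(1 / (2 * (π : ℂ)))‖ = 1 / (2 * π) := by
        rw [norm_div, norm_one, norm_mul, Complex.norm_real, Real.norm_eq_abs,
          abs_of_pos Real.pi_pos]
        norm_num
      have h3 : ‖∫ x in (0:ℝ)..(2 * π), (Q ((x : ℝ) : AddCircle (2 * π))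
          - H ((x : ℝ) : AddCircle (2 * π)))‖ ≤ δ * |2 * π - 0| := by
        refine intervalIntegral.norm_integral_le_of_norm_le_const fun x _ => ?_
        rw [← norm_neg, neg_sub]
        exact hptbd _
      rw [h2]
      calc 1 / (2 * π) * ‖∫ x in (0:ℝ)..(2 * π), (Q ((x : ℝ) : AddCircle (2 * π))
            - H ((x : ℝ) : AddCircle (2 * π)))‖
          ≤ 1 / (2 * π) * (δ * |2 * π - 0|) := by
            refine mul_le_mul_of_nonneg_left h3 ?_
            positivity
        _ = δ := by
            rw [sub_zero, abs_of_pos Real.two_pi_pos]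
            field_simp
    exact mul_le_mul h1 hBcnorm (norm_nonneg _) hδpos.le
  have h2 := hN n hn
  have htri := dist_triangle4 (∫ x : ℝ, (g x : ℂ) * H ((lam n * x : ℝ) : AddCircle (2 * π)))
    (∫ x : ℝ, (g x : ℂ) * Q ((lam n * x : ℝ) : AddCircle (2 * π))) (M Q * Bc) (M H * Bc)
  show dist (∫ x : ℝ, (g x : ℂ) * H ((lam n * x : ℝ) : AddCircle (2 * π))) (M H * Bc) < ε
  linarith

/-- **Riemann–Lebesgue type averaging lemma.**  Let `φ` be a real Schwartz function whose
Fourier transform is smooth, even, real, nonnegative, equal to `1` on `|ξ| ≤ 1/4` and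
supported in `|ξ| ≤ 1/2`.  For `1 ≤ p < ∞`, the `L^p` norms
`‖φ(x)³ cos((17/12)·2ⁿ x)‖_{L^p}` converge, as `n → ∞`, to
`((1/(2π)) ∫₀^{2π} |cos x|^p dx)^{1/p} · ‖φ³‖_{L^p}`. -/
theorem riemann_averaging_schwartz
    (φ : SchwartzMap ℝ ℝ)
    (hsmooth : ContDiff ℝ (⊤ : ℕ∞) (𝓕 (fun x : ℝ => (φ x : ℂ))))
    (heven : ∀ ξ : ℝ, 𝓕 (fun x : ℝ => (φ x : ℂ)) (-ξ) = 𝓕 (fun x : ℝ => (φ x : ℂ)) ξ)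
    (hreal : ∀ ξ : ℝ, (𝓕 (fun x : ℝ => (φ x : ℂ)) ξ).im = 0)
    (hnonneg : ∀ ξ : ℝ, 0 ≤ (𝓕 (fun x : ℝ => (φ x : ℂ)) ξ).re)
    (hone : ∀ ξ : ℝ, |ξ| ≤ 1/4 → 𝓕 (fun x : ℝ => (φ x : ℂ)) ξ = 1)
    (hsupp : ∀ ξ : ℝ, 𝓕 (fun x : ℝ => (φ x : ℂ)) ξ ≠ 0 → |ξ| ≤ 1/2)
    (p : ℝ) (hp : 1 ≤ p) :
    Tendsto
      (fun n : ℕ =>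
        (∫ x : ℝ, |φ x ^ 3 * Real.cos ((17/12) * 2^n * x)| ^ p) ^ (1/p))
      atTop
      (nhds (((1/(2*π)) * ∫ x in (0:ℝ)..(2*π), |Real.cos x| ^ p) ^ (1/p) *
        (∫ x : ℝ, |φ x ^ 3| ^ p) ^ (1/p))) := by
  clear hsmooth heven hreal hnonneg hone hsupp
  haveI : Fact (0 < 2 * π) := ⟨Real.two_pi_pos⟩
  have hp0 : (0:ℝ) < p := lt_of_lt_of_le one_pos hp
  set g : ℝ → ℝ := fun x => |φ x ^ 3| ^ p with hg
  set h : ℝ → ℝ := fun t => |Real.cos t| ^ p with hh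
  have hgeq : ∀ x, g x = |φ x| ^ (3 * p) := by
    intro x
    show |φ x ^ 3| ^ p = _
    rw [abs_pow, ← Real.rpow_natCast |φ x| 3, ← Real.rpow_mul (abs_nonneg _)]
    norm_num
  have hgnonneg : ∀ x, 0 ≤ g x := fun x => by
    rw [hgeq]; positivity
  have hgcont : Continuous g := by
    refine Continuous.rpow_const ((φ.continuous.pow 3).abs) fun x => Or.inr (by linarith)
  -- integrability of g
  obtain ⟨C0, -, hC0⟩ := φ.decay 0 0
  have hbd : ∀ x, |φ x| ≤ max C0 1 := by
    intro x
    have := hC0 x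
    simp only [pow_zero, one_mul, norm_iteratedFDeriv_zero] at this
    exact le_max_of_le_left (by simpa [Real.norm_eq_abs] using this)
  have hgint : Integrable g := by
    have hφint : Integrable (fun x : ℝ => |φ x|) := φ.integrable.abs
    refine ((hφint.const_mul ((max C0 1) ^ (3 * p - 1))).mono'
      hgcont.aestronglyMeasurable (ae_of_all _ ?_))
    intro x
    rw [Real.norm_eq_abs, abs_of_nonneg (hgnonneg x), hgeq]
    rcases eq_or_lt_of_le (abs_nonneg (φ x)) with h0 | h0
    · rw [← h0, Real.zero_rpow (by positivity : (0:ℝ) < 3 * p).ne', mul_zero]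
    · have hsplit : |φ x| ^ (3 * p) = |φ x| ^ (3 * p - 1) * |φ x| := by
        rw [← Real.rpow_add_one h0.ne' (3 * p - 1)]
        norm_num
      rw [hsplit]
      have hexp : (0:ℝ) ≤ 3 * p - 1 := by linarith
      have h1 : |φ x| ^ (3 * p - 1) ≤ (max C0 1) ^ (3 * p - 1) :=
        Real.rpow_le_rpow (abs_nonneg _) (hbd x) hexp
      exact mul_le_mul_of_nonneg_right h1 (abs_nonneg _)
  -- the periodic function and its lift
  have hCper : Function.Periodic (fun t : ℝ => ((h t : ℝ) : ℂ)) (2 * π) := by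
    intro t
    show ((|Real.cos (t + 2 * π)| ^ p : ℝ) : ℂ) = _
    rw [Real.cos_periodic t]
  have hCcont : Continuous (fun t : ℝ => ((h t : ℝ) : ℂ)) :=
    Complex.continuous_ofReal.comp
      (Continuous.rpow_const (Real.continuous_cos.abs) fun x => Or.inr (by linarith))
  set H : C(AddCircle (2 * π), ℂ) :=
    ⟨hCper.lift, Continuous.quotient_liftOn' hCcont _⟩ with hH
  have hlift : ∀ y : ℝ, H ((y : ℝ) : AddCircle (2 * π)) = ((h y : ℝ) : ℂ) := fun y =>
    Function.Periodic.lift_coe hCper y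
  -- the frequencies
  set lam : ℕ → ℝ := fun n => 17/12 * 2^n with hlam
  have hlamten : Tendsto lam atTop atTop :=
    (tendsto_pow_atTop_atTop_of_one_lt (by norm_num : (1:ℝ) < 2)).const_mul_atTop (by norm_num)
  -- apply the key lemma
  have hkey := averaging_key g hgint lam hlamten H
  -- turn the complex statement into a real one
  set A : ℝ := (1/(2*π)) * ∫ x in (0:ℝ)..(2*π), h x with hA
  set B : ℝ := ∫ x : ℝ, g x with hB
  have hseq : ∀ n : ℕ, (∫ x : ℝ, (g x : ℂ) * H ((lam n * x : ℝ) : AddCircle (2 * π)))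
      = (((∫ x : ℝ, g x * h (lam n * x)) : ℝ) : ℂ) := by
    intro n
    calc (∫ x : ℝ, (g x : ℂ) * H ((lam n * x : ℝ) : AddCircle (2 * π)))
        = ∫ x : ℝ, (((g x * h (lam n * x) : ℝ)) : ℂ) := by
          congr 1
          funext x
          rw [hlift, ← Complex.ofReal_mul]
      _ = (((∫ x : ℝ, g x * h (lam n * x)) : ℝ) : ℂ) := integral_ofReal
  have hlim : ((1 / (2 * π : ℂ)) * ∫ x in (0:ℝ)..(2 * π), H ((x : ℝ) : AddCircle (2 * π))) *
      (∫ x : ℝ, (g x : ℂ)) = ((A * B : ℝ) : ℂ) := by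
    have e1 : (∫ x in (0:ℝ)..(2 * π), H ((x : ℝ) : AddCircle (2 * π)))
        = (((∫ x in (0:ℝ)..(2*π), h x) : ℝ) : ℂ) := by
      calc (∫ x in (0:ℝ)..(2 * π), H ((x : ℝ) : AddCircle (2 * π)))
          = ∫ x in (0:ℝ)..(2 * π), ((h x : ℝ) : ℂ) :=
            intervalIntegral.integral_congr fun x _ => hlift x
        _ = (((∫ x in (0:ℝ)..(2*π), h x) : ℝ) : ℂ) := intervalIntegral.integral_ofReal
    have e2 : (∫ x : ℝ, (g x : ℂ)) = ((B : ℝ) : ℂ) := integral_ofReal (𝕜 := ℂ)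
    rw [e1, e2, hA, hB]
    push_cast
    ring
  rw [hlim] at hkey
  have hIt : Tendsto (fun n => ∫ x : ℝ, g x * h (lam n * x)) atTop (nhds (A * B)) := by
    have h3 := (Complex.continuous_re.tendsto _).comp hkey
    simp only [Function.comp_def, hseq, Complex.ofReal_re] at h3
    exact h3
  -- continuity of the p-th root
  have hA0 : 0 ≤ A := by
    rw [hA]
    refine mul_nonneg (by positivity) (intervalIntegral.integral_nonneg Real.two_pi_pos.le
      fun u _ => by positivity)
  have hB0 : 0 ≤ B := integral_nonneg hgnonneg
  have hcontpow : ContinuousAt (fun y : ℝ => y ^ (1/p)) (A * B) :=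
    Real.continuousAt_rpow_const _ _ (Or.inr (by positivity))
  have hfinal := hcontpow.tendsto.comp hIt
  have hIeq : (fun n : ℕ => (∫ x : ℝ, |φ x ^ 3 * Real.cos ((17/12) * 2^n * x)| ^ p) ^ (1/p))
      = fun n => (∫ x : ℝ, g x * h (lam n * x)) ^ (1/p) := by
    funext n
    congr 1
    congr 1
    funext x
    rw [abs_mul, Real.mul_rpow (abs_nonneg _) (abs_nonneg _)]
  rw [hIeq, ← Real.mul_rpow hA0 hB0]
  exact hfinal
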